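/- arXiv:2602.06257 — 2 statements merged into one kernel-verified Lean document; each statement's English description precedes it below -/
import Mathlib

section
/- Fix n ≥ 1, ε > 0 with n·ε ≤ 1, η > 0 and ν = 1/16. Let Δ_{n,ε} := {q : Fin n → ℝ : ∑_i q i = 1 and q i ≥ ε for all i}, and R_{η,ν}(q) := (1/η)·∑_i q i · log(q i) − (1/ν)·∑_i log(q i). Let D : Fin n → ℝ and let p ∈ Δ_{n,ε} be a minimizer over Δ_{n,ε} of F(q) := ∑_i D i · q i + R_{η,ν}(q). Let R ⊆ Fin n, y ∈ {−1, 1}, q₀ := ∑_{i∈R} p i, and let d̂ : Fin n → ℝ be either identically 0, or (with R nonempty, so q₀ > 0) d̂ i = y/q₀ if i ∈ R and d̂ i = 0 otherwise. If p' ∈ Δ_{n,ε} is a minimizer over Δ_{n,ε} of F(q) + ∑_i d̂ i · q i, then p' i ≤ 2 · p i for all i ∈ Fin n. -/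
open Finset

/-- The `ε`-shrunk probability simplex over `Fin n`. -/
def shrunkSimplex (n : ℕ) (ε : ℝ) : Set (Fin n → ℝ) :=
  {q | (∑ i, q i) = 1 ∧ ∀ i, ε ≤ q i}

/-- The negative-entropy plus log-barrier regularizer `R_{η,ν}`. -/
noncomputable def ftrlReg (n : ℕ) (η ν : ℝ) (q : Fin n → ℝ) : ℝ :=
  (1 / η) * ∑ i, q i * Real.log (q i) - (1 / ν) * ∑ i, Real.log (q i)

/-- The FTRL objective `F(q) = ⟨D, q⟩ + R_{η,ν}(q)`. -/
noncomputable def ftrlObj (n : ℕ) (η ν : ℝ) (D : Fin n → ℝ) (q : Fin n → ℝ) : ℝ :=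
  (∑ i, D i * q i) + ftrlReg n η ν q

/-!
Adding the first-order optimality conditions of `p` and `p'` over the convex set `Δ_{n,ε}` gives
`⟨∇R(p') - ∇R(p), p' - p⟩ ≤ ⟨d̂, p - p'⟩`. Coordinatewise, the entropy part of the left side is
nonnegative because `log` is monotone, and the log barrier contributes `16 (p'ᵢ - pᵢ)² / (pᵢ p'ᵢ)`,
which exceeds `8` at a coordinate with `p'ᵢ > 2 pᵢ`. The right side is `0` for `d̂ = 0` and at
most `1` for `y = 1`. For `y = -1` it is `∑_{i ∈ R} (p'ᵢ - pᵢ) / q₀`, and each of its terms is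
dominated by the barrier term of the same coordinate up to `pᵢ / (15 q₀)`, a total slack of `1/15`.
-/

open Real

theorem IsMinOn.hasFDerivWithinAt_sub_nonneg {E : Type*} [NormedAddCommGroup E]
    [NormedSpace ℝ E] {f : E → ℝ} {f' : E →L[ℝ] ℝ} {s : Set E} {a x : E}
    (h : IsMinOn f s a) (hs : Convex ℝ s) (ha : a ∈ s) (hx : x ∈ s)
    (hf : HasFDerivWithinAt f f' s a) : 0 ≤ f' (x - a) :=
  h.localize.hasFDerivWithinAt_nonneg hf <|
    sub_mem_posTangentConeAt_of_segment_subset (hs.segment_subset ha hx)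

theorem hasFDerivAt_sum_comp_apply {ι : Type*} [Fintype ι] {φ : ι → ℝ → ℝ} {φ' : ι → ℝ}
    {x : ι → ℝ} (hφ : ∀ i, HasDerivAt (φ i) (φ' i) (x i)) :
    HasFDerivAt (fun y => ∑ i, φ i (y i))
      (∑ i, φ' i • ContinuousLinearMap.proj (R := ℝ) (φ := fun _ : ι => ℝ) i) x :=
  HasFDerivAt.fun_sum fun i _ => (hφ i).comp_hasFDerivAt x (hasFDerivAt_apply i x)

theorem convex_shrunkSimplex (n : ℕ) (ε : ℝ) : Convex ℝ (shrunkSimplex n ε) := by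
  rintro p ⟨hp₁, hp₂⟩ q ⟨hq₁, hq₂⟩ s t hs ht hst
  refine ⟨?_, fun i => ?_⟩
  · simp [sum_add_distrib, ← mul_sum, hp₁, hq₁, hst]
  · have := add_le_add (mul_le_mul_of_nonneg_left (hp₂ i) hs)
      (mul_le_mul_of_nonneg_left (hq₂ i) ht)
    rw [← add_mul, hst, one_mul] at this
    simpa using this

theorem pos_of_mem_shrunkSimplex {n : ℕ} {ε : ℝ} (hε : 0 < ε) {q : Fin n → ℝ}
    (hq : q ∈ shrunkSimplex n ε) (i : Fin n) : 0 < q i :=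
  hε.trans_le (hq.2 i)

noncomputable def ftrlRegDeriv (η ν t : ℝ) : ℝ :=
  (1 / η) * (log t + 1) - (1 / ν) / t

theorem ftrlObj_eq_sum (n : ℕ) (η ν : ℝ) (c q : Fin n → ℝ) :
    ftrlObj n η ν c q = ∑ i, (c i * q i + (1 / η) * (q i * log (q i)) - (1 / ν) * log (q i)) := by
  simp only [ftrlObj, ftrlReg, sum_sub_distrib, sum_add_distrib, mul_sum]
  ring

theorem ftrlObj_add_linear (n : ℕ) (η ν : ℝ) (c d q : Fin n → ℝ) :
    ftrlObj n η ν c q + ∑ i, d i * q i = ftrlObj n η ν (c + d) q := by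
  simp only [ftrlObj, Pi.add_apply, add_mul, sum_add_distrib]
  ring

theorem hasFDerivAt_ftrlObj (n : ℕ) (η ν : ℝ) (c q : Fin n → ℝ) (hq : ∀ i, q i ≠ 0) :
    HasFDerivAt (ftrlObj n η ν c)
      (∑ i, (c i + ftrlRegDeriv η ν (q i)) •
        ContinuousLinearMap.proj (R := ℝ) (φ := fun _ : Fin n => ℝ) i) q := by
  rw [funext (ftrlObj_eq_sum n η ν c)]
  refine hasFDerivAt_sum_comp_apply
    (φ := fun i t => c i * t + (1 / η) * (t * log t) - (1 / ν) * log t) fun i => ?_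
  exact (((hasDerivAt_id (q i)).const_mul (c i)).add
    ((hasDerivAt_mul_log (hq i)).const_mul (1 / η))).sub
    ((hasDerivAt_log (hq i)).const_mul (1 / ν)) |>.congr_deriv (by simp [ftrlRegDeriv]; ring)

theorem sum_deriv_mul_sub_nonneg_of_isMinOn_ftrlObj {n : ℕ} {ε η ν : ℝ} (hε : 0 < ε)
    {c p q : Fin n → ℝ}
    (hp : p ∈ shrunkSimplex n ε) (hmin : IsMinOn (ftrlObj n η ν c) (shrunkSimplex n ε) p)
    (hq : q ∈ shrunkSimplex n ε) :
    0 ≤ ∑ i, (c i + ftrlRegDeriv η ν (p i)) * (q i - p i) := by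
  have hderiv := hasFDerivAt_ftrlObj n η ν c p fun i => (pos_of_mem_shrunkSimplex hε hp i).ne'
  simpa [mul_comm] using
    hmin.hasFDerivWithinAt_sub_nonneg (convex_shrunkSimplex n ε) hp hq hderiv.hasFDerivWithinAt

/-- `(b - a)² / (a b) = (1/a - 1/b) (b - a)`: the symmetrized Bregman divergence of `-log`. -/
noncomputable def symmLogBarrierDiv (a b : ℝ) : ℝ := (b - a) ^ 2 / (a * b)

theorem mul_symmLogBarrierDiv_le_ftrlRegDeriv_sub_mul {η ν a b : ℝ} (hη : 0 < η) (ha : 0 < a)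
    (hb : 0 < b) :
    (1 / ν) * symmLogBarrierDiv a b ≤ (ftrlRegDeriv η ν b - ftrlRegDeriv η ν a) * (b - a) := by
  have hlog : 0 ≤ (log b - log a) * (b - a) := by
    rcases le_total a b with h | h
    · exact mul_nonneg (sub_nonneg.2 (log_le_log ha h)) (sub_nonneg.2 h)
    · exact mul_nonneg_of_nonpos_of_nonpos (sub_nonpos.2 (log_le_log hb h)) (sub_nonpos.2 h)
  have hsplit : (ftrlRegDeriv η ν b - ftrlRegDeriv η ν a) * (b - a)
      = (1 / η) * ((log b - log a) * (b - a)) + (1 / ν) * symmLogBarrierDiv a b := by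
    unfold ftrlRegDeriv symmLogBarrierDiv
    field_simp
    ring
  rw [hsplit]
  linarith [mul_nonneg (one_div_pos.2 hη).le hlog]

theorem sum_symmLogBarrierDiv_le_of_isMinOn_ftrlObj {n : ℕ} {ε η ν : ℝ} (hε : 0 < ε) (hη : 0 < η)
    {c d p p' : Fin n → ℝ}
    (hp : p ∈ shrunkSimplex n ε) (hpmin : IsMinOn (ftrlObj n η ν c) (shrunkSimplex n ε) p)
    (hp' : p' ∈ shrunkSimplex n ε)
    (hp'min : IsMinOn (ftrlObj n η ν (c + d)) (shrunkSimplex n ε) p') :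
    ∑ i, (1 / ν) * symmLogBarrierDiv (p i) (p' i) ≤ ∑ i, d i * (p i - p' i) := by
  have h := sum_deriv_mul_sub_nonneg_of_isMinOn_ftrlObj hε hp hpmin hp'
  have h' := sum_deriv_mul_sub_nonneg_of_isMinOn_ftrlObj hε hp' hp'min hp
  calc ∑ i, (1 / ν) * symmLogBarrierDiv (p i) (p' i)
      ≤ ∑ i, (ftrlRegDeriv η ν (p' i) - ftrlRegDeriv η ν (p i)) * (p' i - p i) :=
        sum_le_sum fun i _ => mul_symmLogBarrierDiv_le_ftrlRegDeriv_sub_mul hη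
          (pos_of_mem_shrunkSimplex hε hp i) (pos_of_mem_shrunkSimplex hε hp' i)
    _ = ∑ i, d i * (p i - p' i) - (∑ i, (c i + ftrlRegDeriv η ν (p i)) * (p' i - p i)
          + ∑ i, ((c + d) i + ftrlRegDeriv η ν (p' i)) * (p i - p' i)) := by
        rw [← sum_add_distrib, ← sum_sub_distrib]
        refine sum_congr rfl fun i _ => ?_
        simp only [Pi.add_apply]
        ring
    _ ≤ ∑ i, d i * (p i - p' i) := by linarith

theorem symmLogBarrierDiv_nonneg {a b : ℝ} (ha : 0 < a) (hb : 0 < b) :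
    0 ≤ symmLogBarrierDiv a b := by
  unfold symmLogBarrierDiv; positivity

theorem one_half_lt_symmLogBarrierDiv {a b : ℝ} (ha : 0 < a) (hab : 2 * a < b) :
    1 / 2 < symmLogBarrierDiv a b := by
  unfold symmLogBarrierDiv
  rw [lt_div_iff₀ (by nlinarith)]
  nlinarith [mul_pos ha (show 0 < b - 2 * a by linarith)]

theorem sub_div_add_seven_le_symmLogBarrierDiv {a b : ℝ} (ha : 0 < a) (hab : 2 * a < b) :
    (b - a) / a + 7 ≤ 16 * symmLogBarrierDiv a b := by
  unfold symmLogBarrierDiv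
  rw [mul_div_assoc', div_add' _ _ _ ha.ne', div_le_div_iff₀ ha (by nlinarith)]
  nlinarith [mul_pos ha (show 0 < b - 2 * a by linarith), sq_nonneg (b - 2 * a)]

theorem sub_sub_div_le_symmLogBarrierDiv {a b q : ℝ} (ha : 0 < a) (hb : 0 < b) (haq : a ≤ q) :
    (b - a - a / 15) / q ≤ 16 * symmLogBarrierDiv a b := by
  have hq : 0 < q := ha.trans_le haq
  rcases le_or_gt (b - a - a / 15) 0 with hsmall | hlarge
  · exact (div_nonpos_of_nonpos_of_nonneg hsmall hq.le).trans
      (mul_nonneg (by norm_num) (symmLogBarrierDiv_nonneg ha hb))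
  · have hquad : (b - a - a / 15) * b ≤ 16 * (b - a) ^ 2 := by
      nlinarith [sq_nonneg (b - a - 7 * a / 225)]
    unfold symmLogBarrierDiv
    rw [mul_div_assoc', div_le_div_iff₀ hq (by positivity)]
    nlinarith [mul_le_mul_of_nonneg_left haq (by positivity : (0:ℝ) ≤ 16 * (b - a) ^ 2),
      mul_le_mul_of_nonneg_left hquad ha.le]

theorem le_two_mul_of_sum_symmLogBarrierDiv_le {ι : Type*} [Fintype ι] {a b : ι → ℝ}
    (ha : ∀ i, 0 < a i) (hb : ∀ i, 0 < b i)
    (h : ∑ i, 16 * symmLogBarrierDiv (a i) (b i) ≤ 8) (i : ι) : b i ≤ 2 * a i := by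
  by_contra! hi
  have := single_le_sum (fun j _ => mul_nonneg (by norm_num : (0:ℝ) ≤ 16)
    (symmLogBarrierDiv_nonneg (ha j) (hb j))) (mem_univ i)
  linarith [one_half_lt_symmLogBarrierDiv (ha i) hi]

theorem sum_mem_div_mul_sub_le_one {ι : Type*} {a b : ι → ℝ} (ha : ∀ i, 0 ≤ a i)
    (hb : ∀ i, 0 ≤ b i) (R : Finset ι) : ∑ i ∈ R, 1 / (∑ j ∈ R, a j) * (a i - b i) ≤ 1 := by
  rw [← mul_sum, sum_sub_distrib, one_div_mul_eq_div]
  calc (∑ i ∈ R, a i - ∑ i ∈ R, b i) / ∑ j ∈ R, a j ≤ (∑ i ∈ R, a i) / ∑ j ∈ R, a j := by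
        gcongr
        · exact sum_nonneg fun i _ => ha i
        · exact sub_le_self _ (sum_nonneg fun i _ => hb i)
    _ ≤ 1 := div_self_le_one _

theorem le_two_mul_of_sum_symmLogBarrierDiv_le_neg {ι : Type*} [Fintype ι] [DecidableEq ι]
    {a b : ι → ℝ} (ha : ∀ i, 0 < a i) (hb : ∀ i, 0 < b i) {R : Finset ι}
    (h : ∑ i, 16 * symmLogBarrierDiv (a i) (b i) ≤ ∑ i ∈ R, -1 / (∑ j ∈ R, a j) * (a i - b i))
    (i : ι) : b i ≤ 2 * a i := by
  by_contra! hi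
  set q := ∑ j ∈ R, a j
  have haq : ∀ j ∈ R, a j ≤ q := fun j hj => single_le_sum (fun k _ => (ha k).le) hj
  set g : ι → ℝ := fun j =>
    16 * symmLogBarrierDiv (a j) (b j) - if j ∈ R then (b j - a j - a j / 15) / q else 0
  -- `g ≥ 0` everywhere and `g i ≥ 7`, whereas `h` forces `∑ g ≤ 1/15`.
  have hg : ∀ j, 0 ≤ g j := by
    intro j
    by_cases hj : j ∈ R
    · simpa [g, hj] using sub_sub_div_le_symmLogBarrierDiv (ha j) (hb j) (haq j hj)
    · simpa [g, hj] using symmLogBarrierDiv_nonneg (ha j) (hb j)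
  have hgi : 7 ≤ g i := by
    by_cases hiR : i ∈ R
    · have hq : 0 < q := (ha i).trans_le (haq i hiR)
      have h1 : (b i - a i - a i / 15) / q ≤ (b i - a i) / a i :=
        (div_le_div_of_nonneg_right (by linarith [ha i]) hq.le).trans
          (div_le_div_of_nonneg_left (by linarith [ha i]) (ha i) (haq i hiR))
      have := sub_div_add_seven_le_symmLogBarrierDiv (ha i) hi
      simp only [g, if_pos hiR]
      linarith
    · have := one_half_lt_symmLogBarrierDiv (ha i) hi
      simp only [g, if_neg hiR]
      linarith
  have hterm : ∀ j, (b j - a j - a j / 15) / q = -1 / q * (a j - b j) - a j / q / 15 := by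
    intro j; ring
  have hsum : ∑ j, g j = ∑ j, 16 * symmLogBarrierDiv (a j) (b j)
      - ∑ j ∈ R, -1 / q * (a j - b j) + q / q / 15 := by
    simp only [g, sum_sub_distrib, sum_ite_mem, univ_inter, hterm]
    rw [← sum_div, ← sum_div]
    ring
  have := single_le_sum (fun j _ => hg j) (mem_univ i)
  linarith [div_self_le_one q]

theorem stmt12_general (n : ℕ) (ε η ν : ℝ)
    (hε : 0 < ε) (hη : 0 < η) (hν : ν = 1 / 16)
    (D : Fin n → ℝ)
    (p : Fin n → ℝ) (hp : p ∈ shrunkSimplex n ε)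
    (hpmin : ∀ q ∈ shrunkSimplex n ε, ftrlObj n η ν D p ≤ ftrlObj n η ν D q)
    (R : Finset (Fin n)) (y : ℝ) (hy : y = -1 ∨ y = 1)
    (dhat : Fin n → ℝ)
    (hdhat : dhat = (fun _ => 0) ∨
      (R.Nonempty ∧ dhat = fun i => if i ∈ R then y / (∑ j ∈ R, p j) else 0))
    (p' : Fin n → ℝ) (hp' : p' ∈ shrunkSimplex n ε)
    (hp'min : ∀ q ∈ shrunkSimplex n ε,
      ftrlObj n η ν D p' + ∑ i, dhat i * p' i ≤ ftrlObj n η ν D q + ∑ i, dhat i * q i) :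
    ∀ i, p' i ≤ 2 * p i := by
  have hpos := pos_of_mem_shrunkSimplex hε hp
  have hpos' := pos_of_mem_shrunkSimplex hε hp'
  have hstab := sum_symmLogBarrierDiv_le_of_isMinOn_ftrlObj hε hη hp (isMinOn_iff.2 hpmin) hp'
    (d := dhat) <| isMinOn_iff.2 fun q hq => by simpa only [ftrlObj_add_linear] using hp'min q hq
  rw [hν, one_div_one_div] at hstab
  rcases hdhat with rfl | ⟨-, rfl⟩
  · refine le_two_mul_of_sum_symmLogBarrierDiv_le hpos hpos' ?_
    simp only [zero_mul, sum_const_zero] at hstab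
    linarith
  · simp only [ite_mul, zero_mul, sum_ite_mem, univ_inter] at hstab
    rcases hy with rfl | rfl
    · exact le_two_mul_of_sum_symmLogBarrierDiv_le_neg hpos hpos' hstab
    · refine le_two_mul_of_sum_symmLogBarrierDiv_le hpos hpos' ?_
      linarith [sum_mem_div_mul_sub_le_one (fun i => (hpos i).le) (fun i => (hpos' i).le) R]

theorem stmt12 (n : ℕ) (hn : 1 ≤ n) (ε η ν : ℝ)
    (hε : 0 < ε) (hnε : (n : ℝ) * ε ≤ 1) (hη : 0 < η) (hν : ν = 1 / 16)
    (D : Fin n → ℝ)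
    (p : Fin n → ℝ) (hp : p ∈ shrunkSimplex n ε)
    (hpmin : ∀ q ∈ shrunkSimplex n ε, ftrlObj n η ν D p ≤ ftrlObj n η ν D q)
    (R : Finset (Fin n)) (y : ℝ) (hy : y = -1 ∨ y = 1)
    (dhat : Fin n → ℝ)
    (hdhat : dhat = (fun _ => 0) ∨
      (R.Nonempty ∧ dhat = fun i => if i ∈ R then y / (∑ j ∈ R, p j) else 0))
    (p' : Fin n → ℝ) (hp' : p' ∈ shrunkSimplex n ε)
    (hp'min : ∀ q ∈ shrunkSimplex n ε,
      ftrlObj n η ν D p' + ∑ i, dhat i * p' i ≤ ftrlObj n η ν D q + ∑ i, dhat i * q i) :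
    ∀ i, p' i ≤ 2 * p i :=
  stmt12_general n ε η ν hε hη hν D p hp hpmin R y hy dhat hdhat p' hp' hp'min
end

section
/- Let n and T be real numbers with n ≥ 2 and T ≥ 1. Define L := log n, s := √(T·L), A := min(T, max(min(n, T), s)), and B := min(T, min(n + s, √n · s)). Then (1/2)·A ≤ B ≤ 2·A. Consequently, max(√(T·log n), min(n, T)) and min(√(T·log n) + n, √(T·n·log n)) agree up to a factor of 2 (after capping both at T). -/
/-!
Write `m = min n T`. For the lower bound, `min n T ≤ √(n T)` and `log n ≥ 1/4` give
`m ≤ 2 √n √(T log n)`, while `√(T log n) ≤ √n √(T log n)` as `n ≥ 1`; together with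
`max m s ≤ n + s` this bounds `A` by twice each term of `B`. For the upper bound,
`min T (n + s) ≤ 2 max m s` by splitting on whether `n ≤ T`.
-/

open Real

lemma one_le_four_mul_log {n : ℝ} (hn : 2 ≤ n) : 1 ≤ 4 * log n := by
  have h2 : log 2 ≤ log n := log_le_log (by norm_num) hn
  linarith [log_two_gt_d9]

lemma min_le_two_mul_sqrt_mul_sqrt {n T L : ℝ} (hn : 0 ≤ n) (hT : 0 ≤ T) (hL : 1 ≤ 4 * L) :
    min n T ≤ 2 * (√n * √(T * L)) := by
  have hm : 0 ≤ min n T := le_min hn hT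
  have hsq : min n T * min n T ≤ n * T := mul_le_mul (min_le_left _ _) (min_le_right _ _) hm hn
  refine (pow_le_pow_iff_left₀ hm (by positivity) two_ne_zero).1 ?_
  calc min n T ^ 2 ≤ n * T * (4 * L) := by nlinarith [mul_nonneg hn hT]
    _ = (2 * (√n * √(T * L))) ^ 2 := by
      rw [mul_pow, mul_pow, sq_sqrt hn, sq_sqrt (by nlinarith)]; ring

lemma min_add_le_two_mul_max_min {n T s : ℝ} (hT : 0 ≤ T) :
    min T (n + s) ≤ 2 * max (min n T) s := by
  rcases le_total n T with h | h
  · rw [min_eq_left h]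
    linarith [min_le_right T (n + s), le_max_left n s, le_max_right n s]
  · rw [min_eq_right h]
    linarith [min_le_left T (n + s), le_max_left T s]

theorem stmt18 (n T : ℝ) (hn : 2 ≤ n) (hT : 1 ≤ T) :
    let L := Real.log n
    let s := Real.sqrt (T * L)
    let A := min T (max (min n T) s)
    let B := min T (min (n + s) (Real.sqrt n * s))
    (1 / 2) * A ≤ B ∧ B ≤ 2 * A := by
  intro L s A B
  have hs : 0 ≤ s := sqrt_nonneg _
  have hA_le : A ≤ max (min n T) s := min_le_right _ _
  have hmax_le_add : max (min n T) s ≤ n + s :=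
    max_le (by linarith [min_le_left n T]) (by linarith)
  have hmax_le_mul : max (min n T) s ≤ 2 * (√n * s) := by
    have hs_le : s ≤ √n * s := le_mul_of_one_le_left hs (one_le_sqrt.2 (by linarith))
    exact max_le (min_le_two_mul_sqrt_mul_sqrt (by linarith) (by linarith)
      (one_le_four_mul_log hn)) (by linarith)
  constructor
  · refine le_min ?_ (le_min ?_ ?_) <;> linarith [min_le_left T (max (min n T) s)]
  · calc B ≤ min T (n + s) := min_le_min_left _ (min_le_left _ _)
      _ ≤ 2 * A := by
        rw [mul_min_of_nonneg _ _ zero_le_two]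
        exact le_min (by linarith [min_le_left T (n + s)])
          (min_add_le_two_mul_max_min (by linarith))
end
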